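/- Let a, b, n be natural numbers with a ≥ 2, b ≥ 2 and a + b ≤ n − 1. Then r(n,a,b) > p(n,a)·p(n,b), where r(n,a,b) := (4·a!·b!·(n−a−b)!/(n−1)!)·G(n,a,b) and G(n,a,b) := n/(a·b·(a+1)·(b+1)) − (a(a+1)+b(b+1)+ab)/(a·b·(a+1)·(b+1)·(a+b+1)) + 1/((a+b)·((a+b)²−1)). (This shows that under the Yule–Harding–Kingman model the events that two disjoint non-exhaustive sets A and B, each of size at least 2, are clades are positively correlated.) -/

import Mathlib

open Nat

/-!
Pulling the prefactor of `r n a b` out of `p n a * p n b` leaves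
`n / (a b (a+1) (b+1))` times the ratio of falling factorials `(n-a)^{(b)} / n^{(b)}`, which for
`b ≥ 2` is at most `(n-a)(n-a-1) / (n(n-1))`. By symmetry let `b ≤ a`. Then
`(n-a)(n-a-1)/(n-1) = n - 2a + a(a-1)/(n-1)`, while `a b (a+1) (b+1) G n a b` is
`n - 2a + (2a(s+1) - S)/(s+1)` plus a positive term, where `s = a + b` and
`S = a(a+1) + b(b+1) + ab`. Since `n - 1 ≥ s`, it remains to check
`a(a-1)/s < (2a(s+1) - S)/(s+1)`, a polynomial inequality that holds for `1 ≤ b ≤ a`.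
-/

/-- `p n a` : probability that a fixed `a`-element subset of an `n`-set is a clade
of a YHK tree (for `1 ≤ a ≤ n - 1`). -/
noncomputable def p (n a : ℕ) : ℝ :=
  (2 * (n : ℝ) / ((a : ℝ) * ((a : ℝ) + 1))) * ((n.choose a : ℝ))⁻¹

/-- The quantity `G_n(a,b)` from Theorem 5 (Case 5). -/
noncomputable def G (n a b : ℕ) : ℝ :=
  (n : ℝ) / ((a : ℝ) * (b : ℝ) * ((a : ℝ) + 1) * ((b : ℝ) + 1)) -
    ((a : ℝ) * ((a : ℝ) + 1) + (b : ℝ) * ((b : ℝ) + 1) + (a : ℝ) * (b : ℝ)) /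
      ((a : ℝ) * (b : ℝ) * ((a : ℝ) + 1) * ((b : ℝ) + 1) * ((a : ℝ) + (b : ℝ) + 1)) +
    1 / (((a : ℝ) + (b : ℝ)) * (((a : ℝ) + (b : ℝ)) ^ 2 - 1))

/-- `r n a b` : joint probability that two fixed disjoint, non-exhaustive subsets of
sizes `a` and `b` are both clades under the YHK model. -/
noncomputable def r (n a b : ℕ) : ℝ :=
  (4 * (a ! : ℝ) * (b ! : ℝ) * ((n - a - b)! : ℝ) / ((n - 1)! : ℝ)) * G n a b

theorem Nat.descFactorial_add_mul_descFactorial_le {m n : ℕ} (h : m ≤ n) (j k : ℕ) :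
    m.descFactorial (j + k) * n.descFactorial j ≤
      n.descFactorial (j + k) * m.descFactorial j := by
  rw [← descFactorial_mul_descFactorial (Nat.le_add_right j k),
    ← descFactorial_mul_descFactorial (Nat.le_add_right j k), Nat.add_sub_cancel_left,
    Nat.mul_right_comm ((n - j).descFactorial k)]
  gcongr

lemma p_mul_p_eq {a b n : ℕ} (hn : 0 < n) (h : a + b ≤ n) :
    p n a * p n b = (4 * (a ! : ℝ) * (b ! : ℝ) * ((n - a - b)! : ℝ) / ((n - 1)! : ℝ)) *
      (n * (n - a).descFactorial b / n.descFactorial b / (a * b * (a + 1) * (b + 1))) := by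
  have hfa : ((n - a - b)! : ℝ) * (n - a).descFactorial b = (n - a)! := by
    exact_mod_cast factorial_mul_descFactorial (by omega)
  have hfb : ((n - b)! : ℝ) * n.descFactorial b = n ! := by
    exact_mod_cast factorial_mul_descFactorial (by omega)
  have hfn : (n : ℝ) * (n - 1)! = n ! := by
    exact_mod_cast mul_factorial_pred hn.ne'
  have hdesc : (n.descFactorial b : ℝ) ≠ 0 := by
    exact_mod_cast (descFactorial_pos.2 (by omega)).ne'
  rw [p, p, cast_choose ℝ (by omega : a ≤ n), cast_choose ℝ (by omega : b ≤ n), ← hfa,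
    eq_div_of_mul_eq hdesc hfb, ← hfn]
  field_simp
  ring

lemma mul_descFactorial_sub_div_descFactorial_le {a b n : ℕ} (hb : 2 ≤ b) (h : a + b ≤ n) :
    (n : ℝ) * (n - a).descFactorial b / n.descFactorial b ≤
      (n - a) * (n - a - 1) / (n - 1) := by
  obtain ⟨k, rfl⟩ := Nat.exists_eq_add_of_le hb
  have key := (Nat.cast_le (α := ℝ)).2
    (descFactorial_add_mul_descFactorial_le (Nat.sub_le n a) 2 k)
  push_cast [cast_descFactorial_two, Nat.cast_sub (by omega : a ≤ n)] at key
  have hpos : (0 : ℝ) < n.descFactorial (2 + k) := by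
    exact_mod_cast descFactorial_pos.2 (by omega)
  have hn : (2 : ℝ) ≤ n := by exact_mod_cast (by omega : 2 ≤ n)
  rw [div_le_div_iff₀ hpos (by linarith)]
  linarith

lemma sub_mul_sub_div_lt_G {a b n : ℕ} (hb : 1 ≤ b) (hba : b ≤ a) (hn : a + b + 1 ≤ n) :
    ((n : ℝ) - a) * (n - a - 1) / (n - 1) / (a * b * (a + 1) * (b + 1)) < G n a b := by
  have hB : (1 : ℝ) ≤ b := by exact_mod_cast hb
  have hBA : (b : ℝ) ≤ a := by exact_mod_cast hba
  have hN : (a : ℝ) + b + 1 ≤ n := by exact_mod_cast hn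
  rw [G]
  generalize (a : ℝ) = A at *
  generalize (b : ℝ) = B at *
  generalize (n : ℝ) = N at *
  have hD : 0 < A * B * (A + 1) * (B + 1) := by
    have hA0 : 0 < A := by linarith
    have hB0 : 0 < B := by linarith
    positivity
  have hquad : A * (A - 1) * (A + B + 1) <
      (2 * A * (A + B + 1) - (A * (A + 1) + B * (B + 1) + A * B)) * (A + B) := by
    nlinarith [mul_nonneg (mul_nonneg (by linarith : 0 ≤ A + B) (by linarith : 0 ≤ B))
      (sub_nonneg.2 hBA)]
  set D := A * B * (A + 1) * (B + 1)
  set S := A * (A + 1) + B * (B + 1) + A * B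
  have hN1 : N - 1 ≠ 0 := by linarith
  have hs : 0 < A + B := by linarith
  have hs1 : 0 < A + B + 1 := by linarith
  have hbound_eq :
      (N - A) * (N - A - 1) / (N - 1) / D = (N - 2 * A) / D + A * (A - 1) / ((N - 1) * D) := by
    field_simp
    ring
  have hG_eq : N / D - S / (D * (A + B + 1)) + 1 / ((A + B) * ((A + B) ^ 2 - 1)) =
      (N - 2 * A) / D + (2 * A * (A + B + 1) - S) / ((A + B + 1) * D) +
        1 / ((A + B) * ((A + B) ^ 2 - 1)) := by
    field_simp
    ring
  have hn_large : A * (A - 1) / ((N - 1) * D) ≤ A * (A - 1) / ((A + B) * D) := by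
    gcongr
    · nlinarith
    · linarith
  have hquad_lt :
      A * (A - 1) / ((A + B) * D) < (2 * A * (A + B + 1) - S) / ((A + B + 1) * D) := by
    rw [div_lt_div_iff₀ (by positivity) (by positivity)]
    nlinarith [mul_lt_mul_of_pos_right hquad hD]
  have htail_pos : 0 < 1 / ((A + B) * ((A + B) ^ 2 - 1)) := by
    have : 0 < (A + B) ^ 2 - 1 := by nlinarith
    positivity
  linarith

lemma r_comm (n a b : ℕ) : r n a b = r n b a := by
  rw [r, r, G, G, Nat.sub_right_comm n a b]
  ring

/-- Under the YHK model, the events that two disjoint non-exhaustive sets `A` and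
`B`, each of size at least 2, are clades are positively correlated. -/
theorem disjoint_clades_positive_correlation (a b n : ℕ) (ha : 2 ≤ a) (hb : 2 ≤ b)
    (hab : a + b ≤ n - 1) :
    r n a b > p n a * p n b := by
  wlog hba : b ≤ a generalizing a b
  · rw [r_comm, mul_comm]
    exact this b a hb ha (by omega) (by omega)
  calc p n a * p n b
      = (4 * (a ! : ℝ) * (b ! : ℝ) * ((n - a - b)! : ℝ) / ((n - 1)! : ℝ)) *
          (n * (n - a).descFactorial b / n.descFactorial b / (a * b * (a + 1) * (b + 1))) :=
        p_mul_p_eq (by omega) (by omega)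
    _ ≤ (4 * (a ! : ℝ) * (b ! : ℝ) * ((n - a - b)! : ℝ) / ((n - 1)! : ℝ)) *
          (((n : ℝ) - a) * (n - a - 1) / (n - 1) / (a * b * (a + 1) * (b + 1))) := by
        gcongr _ * (?_ / _)
        exact mul_descFactorial_sub_div_descFactorial_le hb (by omega)
    _ < r n a b := by
        rw [r]
        gcongr
        exact sub_mul_sub_div_lt_G (by omega) hba (by omega)
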